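/- The boosted-frame entanglement never exceeds the rest-frame entanglement for equal-helicity states: E(δ) ≤ E(0) for all δ and all η. -/
import Mathlib

open Real Set

noncomputable def binEnt (p : ℝ) : ℝ := -(p * Real.logb 2 p) - (1 - p) * Real.logb 2 (1 - p)

noncomputable def Eent (η δ : ℝ) : ℝ :=
  binEnt ((1 + Real.sqrt (Real.cos (2*η)^2 + Real.sin δ ^2 * Real.sin (2*η)^2)) / 2)

lemma binEnt_eq (p : ℝ) : binEnt p = Real.binEntropy p / Real.log 2 := by
  rw [binEnt, Real.binEntropy, Real.logb, Real.logb]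
  rw [Real.log_inv, Real.log_inv]
  ring

lemma binEnt_anti {p q : ℝ} (hp : p ∈ Icc (2⁻¹:ℝ) 1) (hq : q ∈ Icc (2⁻¹:ℝ) 1)
    (hpq : p ≤ q) : binEnt q ≤ binEnt p := by
  rw [binEnt_eq, binEnt_eq]
  have h2 : (0:ℝ) < Real.log 2 := Real.log_pos (by norm_num)
  apply div_le_div_of_nonneg_right ?_ h2.le
  exact Real.binEntropy_strictAntiOn.antitoneOn hp hq hpq

theorem stmt_13 (η : ℝ) : ∀ δ : ℝ, Eent η δ ≤ Eent η 0 := by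
  intro δ
  set c := Real.cos (2*η)
  set s := Real.sin (2*η)
  have hcs : c^2 + s^2 = 1 := Real.cos_sq_add_sin_sq _
  have h0 : Real.sqrt (c^2 + Real.sin 0 ^2 * s^2) = Real.sqrt (c^2) := by
    simp
  have hle : Real.sqrt (c^2) ≤ Real.sqrt (c^2 + Real.sin δ ^2 * s^2) :=
    Real.sqrt_le_sqrt (by nlinarith [mul_nonneg (sq_nonneg (Real.sin δ)) (sq_nonneg s)])
  have hub : Real.sqrt (c^2 + Real.sin δ ^2 * s^2) ≤ 1 := by
    rw [show (1:ℝ) = Real.sqrt 1 by simp]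
    apply Real.sqrt_le_sqrt
    nlinarith [Real.sin_sq_le_one δ, sq_nonneg s]
  have h1 : Real.sqrt (c^2) ≥ 0 := Real.sqrt_nonneg _
  unfold Eent
  rw [h0]
  apply binEnt_anti
  · constructor <;> [nlinarith; nlinarith [Real.sqrt_le_sqrt (show c^2 ≤ 1 by nlinarith), Real.sqrt_one]]
  · constructor
    · nlinarith [Real.sqrt_nonneg (c^2 + Real.sin δ ^2 * s^2)]
    · linarith
  · linarith
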